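/- In the Boltzmann (low-density) limit, the Gauss–Fermi integral satisfies the asymptotic relation G(η,z)/(exp(η)·exp(z²/2)) → 1 as η → -∞, for each fixed z ∈ ℝ. -/
import Mathlib


open Real MeasureTheory Filter

noncomputable def gaussFermi (η z : ℝ) : ℝ :=
  (Real.sqrt (2 * Real.pi))⁻¹ *
    ∫ ξ : ℝ, Real.exp (-ξ ^ 2 / 2) / (Real.exp (z * ξ - η) + 1)

lemma bound_integrable (z : ℝ) :
    Integrable (fun ξ : ℝ => Real.exp (-ξ ^ 2 / 2 - z * ξ)) := by
  have h : ∀ ξ : ℝ, Real.exp (-ξ ^ 2 / 2 - z * ξ)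
      = Real.exp (z ^ 2 / 2) * Real.exp (-(1/2) * (ξ + z) ^ 2) := by
    intro ξ
    rw [← Real.exp_add]
    ring_nf
  simp_rw [h]
  exact ((integrable_exp_neg_mul_sq (by norm_num : (0:ℝ) < 1/2)).comp_add_right z).const_mul _

lemma bound_integral (z : ℝ) :
    ∫ ξ : ℝ, Real.exp (-ξ ^ 2 / 2 - z * ξ)
      = Real.sqrt (2 * Real.pi) * Real.exp (z ^ 2 / 2) := by
  have h : ∀ ξ : ℝ, Real.exp (-ξ ^ 2 / 2 - z * ξ)
      = Real.exp (z ^ 2 / 2) * Real.exp (-(1/2) * (ξ + z) ^ 2) := by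
    intro ξ
    rw [← Real.exp_add]
    ring_nf
  simp_rw [h]
  rw [MeasureTheory.integral_const_mul, integral_add_right_eq_self (fun x : ℝ => Real.exp (-(1/2) * x ^ 2)) z]
  have := integral_gaussian (1/2 : ℝ)
  simp_rw [sq] at this ⊢
  rw [this]
  rw [mul_comm]
  congr 1
  rw [div_div_eq_mul_div, div_one, mul_comm]

/-- Boltzmann limit: G(η,z)/(exp η · exp(z²/2)) → 1 as η → -∞, for fixed z. -/
theorem gaussFermi_boltzmann_limit (z : ℝ) :
    Tendsto (fun η : ℝ => gaussFermi η z / (Real.exp η * Real.exp (z ^ 2 / 2)))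
      atBot (nhds 1) := by
  set I : ℝ → ℝ := fun η => ∫ ξ : ℝ, Real.exp (-ξ ^ 2 / 2) / (Real.exp (z * ξ) + Real.exp η)
    with hI
  have key : ∀ η ξ : ℝ, Real.exp (-ξ ^ 2 / 2) / (Real.exp (z * ξ - η) + 1)
      = Real.exp η * (Real.exp (-ξ ^ 2 / 2) / (Real.exp (z * ξ) + Real.exp η)) := by
    intro η ξ
    rw [Real.exp_sub]
    have h1 : Real.exp η ≠ 0 := Real.exp_ne_zero η
    have h2 : Real.exp (z * ξ) + Real.exp η ≠ 0 := by positivity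
    field_simp
  have hG : ∀ η : ℝ, gaussFermi η z
      = (Real.sqrt (2 * Real.pi))⁻¹ * (Real.exp η * I η) := by
    intro η
    rw [gaussFermi, hI]
    congr 1
    simp_rw [key η]
    rw [MeasureTheory.integral_const_mul]
  -- limit of I
  have hIlim : Tendsto I atBot (nhds (Real.sqrt (2 * Real.pi) * Real.exp (z ^ 2 / 2))) := by
    rw [← bound_integral z]
    apply tendsto_integral_filter_of_dominated_convergence
      (fun ξ : ℝ => Real.exp (-ξ ^ 2 / 2 - z * ξ))
    · filter_upwards with η
      apply Continuous.aestronglyMeasurable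
      exact (Real.continuous_exp.comp (by continuity)).div
        ((Real.continuous_exp.comp (by continuity)).add continuous_const)
        (fun x => by positivity)
    · filter_upwards [eventually_le_atBot (0 : ℝ)] with η hη
      filter_upwards with ξ
      have h2 : (0:ℝ) < Real.exp (z * ξ) + Real.exp η := by positivity
      rw [Real.norm_eq_abs, abs_of_nonneg (by positivity), Real.exp_sub]
      gcongr
      exact le_add_of_nonneg_right (Real.exp_nonneg η)
    · exact bound_integrable z
    · filter_upwards with ξ
      have h0 : Real.exp (z * ξ) ≠ 0 := Real.exp_ne_zero _
      have : Tendsto (fun η : ℝ => Real.exp (-ξ ^ 2 / 2) / (Real.exp (z * ξ) + Real.exp η))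
          atBot (nhds (Real.exp (-ξ ^ 2 / 2) / (Real.exp (z * ξ) + 0))) := by
        apply Tendsto.div tendsto_const_nhds
        · exact tendsto_const_nhds.add Real.tendsto_exp_atBot
        · simp
      simpa [Real.exp_sub] using this
  have hsqrt : Real.sqrt (2 * Real.pi) ≠ 0 := by
    positivity
  have hfinal : Tendsto (fun η : ℝ => (Real.sqrt (2 * Real.pi))⁻¹ * I η / Real.exp (z ^ 2 / 2))
      atBot (nhds 1) := by
    have := (hIlim.const_mul ((Real.sqrt (2 * Real.pi))⁻¹)).div_const (Real.exp (z ^ 2 / 2))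
    convert this using 2
    field_simp
  apply hfinal.congr
  intro η
  rw [hG η]
  field_simp
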